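/- If M is a finite free module over P_W = Sym(W), M' is a finite free module over P_{W'} = Sym(W'), and (M, W) is stably isomorphic to (M', W'), then the rank of M over P_W equals the rank of M' over P_{W'}. -/

import Mathlib

/-! Symmetric algebras and stable isomorphism of modules over them. -/

/-- The relation on the tensor algebra whose `RingQuot` is the symmetric algebra. -/
inductive SymRel (R : Type*) [CommRing R] (M : Type*) [AddCommGroup M] [Module R M] :
    TensorAlgebra R M → TensorAlgebra R M → Prop
  | mul_comm (x y : TensorAlgebra R M) : SymRel R M (x * y) (y * x)

/-- The symmetric algebra of a module: the tensor algebra modulo commutativity. -/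
def SymmAlgebra (R : Type*) [CommRing R] (M : Type*) [AddCommGroup M] [Module R M] : Type _ :=
  RingQuot (SymRel R M)

private lemma SymmAlgebra.mul_comm' {R : Type*} [CommRing R] {M : Type*}
    [AddCommGroup M] [Module R M] (a b : RingQuot (SymRel R M)) : a * b = b * a := by
  obtain ⟨x, rfl⟩ := RingQuot.mkRingHom_surjective _ a
  obtain ⟨y, rfl⟩ := RingQuot.mkRingHom_surjective _ b
  rw [← map_mul, ← map_mul]
  exact RingQuot.mkRingHom_rel (SymRel.mul_comm x y)

noncomputable instance SymmAlgebra.instCommRing (R : Type*) [CommRing R] (M : Type*)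
    [AddCommGroup M] [Module R M] : CommRing (SymmAlgebra R M) :=
  { (inferInstance : Ring (RingQuot (SymRel R M))) with
    mul_comm := SymmAlgebra.mul_comm' }

noncomputable instance SymmAlgebra.instAlgebra (R : Type*) [CommRing R] (M : Type*)
    [AddCommGroup M] [Module R M] : Algebra R (SymmAlgebra R M) :=
  inferInstanceAs (Algebra R (RingQuot (SymRel R M)))

/-- Functoriality of the symmetric algebra: the algebra map `Sym(f)` induced by a linear
map `f : M →ₗ[R] N`. -/
noncomputable def SymmAlgebra.map (R : Type*) [CommRing R] {M N : Type*}
    [AddCommGroup M] [Module R M] [AddCommGroup N] [Module R N] (f : M →ₗ[R] N) :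
    SymmAlgebra R M →ₐ[R] SymmAlgebra R N :=
  RingQuot.liftAlgHom R
    ⟨((RingQuot.mkAlgHom R (SymRel R N)).comp
        (TensorAlgebra.lift R ((TensorAlgebra.ι R).comp f))),
      by
        intro x y h
        cases h with
        | mul_comm a b =>
          change (RingQuot.mkAlgHom R (SymRel R N))
              (TensorAlgebra.lift R ((TensorAlgebra.ι R).comp f) (a * b)) =
            (RingQuot.mkAlgHom R (SymRel R N))
              (TensorAlgebra.lift R ((TensorAlgebra.ι R).comp f) (b * a))
          rw [map_mul (TensorAlgebra.lift R ((TensorAlgebra.ι R).comp f)),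
            map_mul (TensorAlgebra.lift R ((TensorAlgebra.ι R).comp f))]
          exact RingQuot.mkAlgHom_rel (S := R) (SymRel.mul_comm (R := R) (M := N) _ _)⟩

/-- `(M, W)` is stably isomorphic to `(M', W')`: there is an `F`-vector space `V` and
injections `i : W ↪ V`, `i' : W' ↪ V` inducing an isomorphism
`M ⊗_{Sym(W)} Sym(V) ≅ M' ⊗_{Sym(W')} Sym(V)` of `Sym(V)`-modules. -/
def StablyIso (F : Type) [Field F]
    (W : Type) [AddCommGroup W] [Module F W]
    (W' : Type) [AddCommGroup W'] [Module F W']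
    (M : Type) [AddCommGroup M] [Module (SymmAlgebra F W) M]
    (M' : Type) [AddCommGroup M'] [Module (SymmAlgebra F W') M'] : Prop :=
  ∃ (V : Type) (ag : AddCommGroup V),
    letI := ag
    ∃ mo : Module F V,
      letI := mo
      ∃ (i : W →ₗ[F] V) (i' : W' →ₗ[F] V),
        Function.Injective i ∧ Function.Injective i' ∧
          (letI : Algebra (SymmAlgebra F W) (SymmAlgebra F V) :=
            ((SymmAlgebra.map F i).toRingHom).toAlgebra
           letI : Algebra (SymmAlgebra F W') (SymmAlgebra F V) :=
            ((SymmAlgebra.map F i').toRingHom).toAlgebra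
           Nonempty ((TensorProduct (SymmAlgebra F W) (SymmAlgebra F V) M)
              ≃ₗ[SymmAlgebra F V]
             (TensorProduct (SymmAlgebra F W') (SymmAlgebra F V) M')))

/-! A basis of `M` over `Sym(W)` base-changes to a basis of `M ⊗ Sym(V)` over `Sym(V)` of the
same cardinality, so both ranks equal the rank of the common `Sym(V)`-module. That rank is
well defined because `Sym(V)` maps onto `F` (send `V` to `0`), hence is a nontrivial commutative
ring and has the strong rank condition. -/

noncomputable def SymmAlgebra.counit (R : Type*) [CommRing R] (M : Type*)
    [AddCommGroup M] [Module R M] : SymmAlgebra R M →ₐ[R] R :=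
  RingQuot.liftAlgHom R ⟨TensorAlgebra.lift R (0 : M →ₗ[R] R), by
    rintro _ _ ⟨a, b⟩
    rw [map_mul, map_mul, mul_comm]⟩

instance SymmAlgebra.instNontrivial (R : Type*) [CommRing R] [Nontrivial R] (M : Type*)
    [AddCommGroup M] [Module R M] : Nontrivial (SymmAlgebra R M) :=
  (SymmAlgebra.counit R M).toRingHom.domain_nontrivial

universe u

open scoped TensorProduct in
theorem rank_eq_of_baseChange_linearEquiv {R S S' : Type*} {M M' : Type u}
    [CommRing R] [CommRing S] [CommRing S'] [StrongRankCondition R]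
    [StrongRankCondition S] [StrongRankCondition S'] [Algebra S R] [Algebra S' R]
    [AddCommGroup M] [AddCommGroup M'] [Module S M] [Module S' M']
    [Module.Free S M] [Module.Free S' M'] (e : R ⊗[S] M ≃ₗ[R] R ⊗[S'] M') :
    Module.rank S M = Module.rank S' M' := by
  have := e.rank_eq
  rw [Module.rank_baseChange, Module.rank_baseChange] at this
  exact Cardinal.lift_inj.mp this

theorem stmt_6_general (F : Type) [Field F]
    (W W' : Type) [AddCommGroup W] [AddCommGroup W'] [Module F W] [Module F W']
    (M M' : Type) [AddCommGroup M] [AddCommGroup M']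
    [Module (SymmAlgebra F W) M] [Module (SymmAlgebra F W') M']
    [Module.Free (SymmAlgebra F W) M]
    [Module.Free (SymmAlgebra F W') M']
    (h : StablyIso F W W' M M') :
    Module.rank (SymmAlgebra F W) M = Module.rank (SymmAlgebra F W') M' := by
  obtain ⟨V, _, _, i, i', -, -, ⟨e⟩⟩ := h
  let _ : Algebra (SymmAlgebra F W) (SymmAlgebra F V) := (SymmAlgebra.map F i).toAlgebra
  let _ : Algebra (SymmAlgebra F W') (SymmAlgebra F V) := (SymmAlgebra.map F i').toAlgebra
  exact rank_eq_of_baseChange_linearEquiv e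

/-- If `M` is a finite free module over `Sym(W)`, `M'` is a finite free module over
`Sym(W')`, and `(M, W)` is stably isomorphic to `(M', W')`, then the rank of `M` over
`Sym(W)` equals the rank of `M'` over `Sym(W')`. -/
theorem stmt_6 (F : Type) [Field F]
    (W W' : Type) [AddCommGroup W] [AddCommGroup W'] [Module F W] [Module F W']
    (M M' : Type) [AddCommGroup M] [AddCommGroup M']
    [Module (SymmAlgebra F W) M] [Module (SymmAlgebra F W') M']
    [Module.Free (SymmAlgebra F W) M] [Module.Finite (SymmAlgebra F W) M]
    [Module.Free (SymmAlgebra F W') M'] [Module.Finite (SymmAlgebra F W') M']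
    (h : StablyIso F W W' M M') :
    Module.rank (SymmAlgebra F W) M = Module.rank (SymmAlgebra F W') M' :=
  stmt_6_general F W W' M M' h
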